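/- Define the q-Bell polynomials by B₀(q) = 1 and B_n(q) = ∑_{k=0}^{n−1} [n−1 choose k]_q · B_k(q), where [·]_q is the Gaussian binomial coefficient. Then for all n ≥ 0, the degree of B_n(q) equals g(n), where g(0)=0 and g(n) = max_{1≤k≤n}[(k−1)(n−k) + g(n−k)]. -/

import Mathlib

/-- The Gaussian binomial coefficient `[n choose k]_q` as a polynomial,
defined via the `q`-Pascal recursion
`[n+1 choose k+1]_q = [n choose k]_q + q^(k+1) [n choose k+1]_q`. -/
noncomputable def gaussBinom : ℕ → ℕ → Polynomial ℤ
  | _, 0 => 1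
  | 0, _ + 1 => 0
  | n + 1, k + 1 => gaussBinom n k + Polynomial.X ^ (k + 1) * gaussBinom n (k + 1)
termination_by n k => (n, k)

/-- Johnson's `q`-Bell polynomials: `B₀(q) = 1` and
`B_n(q) = ∑_{k=0}^{n-1} [n-1 choose k]_q B_k(q)`. -/
noncomputable def qBell : ℕ → Polynomial ℤ
  | 0 => 1
  | n + 1 => ∑ k ∈ (Finset.range (n + 1)).attach, gaussBinom n k.1 * qBell k.1
decreasing_by
  have := Finset.mem_range.mp k.2; omega
/-- `g 0 = 0` and `g n = max_{1 ≤ k ≤ n} ((k-1)(n-k) + g (n-k))`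
(below, `k = j + 1` with `j` ranging over `0, …, n-1`). -/
def g : ℕ → ℕ
  | 0 => 0
  | n + 1 => (Finset.range (n + 1)).sup (fun j => j * (n - j) + g (n - j))
decreasing_by
  omega

namespace Stmt10Aux

open Polynomial

/-- coefficientwise nonnegative -/
def Nonneg (p : Polynomial ℤ) : Prop := ∀ i, 0 ≤ p.coeff i

lemma nonneg_one : Nonneg 1 := by
  intro i; simp [coeff_one]; positivity

lemma nonneg_zero : Nonneg 0 := by intro i; simp

lemma nonneg_add {p q : Polynomial ℤ} (hp : Nonneg p) (hq : Nonneg q) : Nonneg (p + q) := by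
  intro i; simp only [coeff_add]; exact add_nonneg (hp i) (hq i)

lemma nonneg_mul {p q : Polynomial ℤ} (hp : Nonneg p) (hq : Nonneg q) : Nonneg (p * q) := by
  intro i
  rw [coeff_mul]
  exact Finset.sum_nonneg fun x _ => mul_nonneg (hp x.1) (hq x.2)

lemma nonneg_Xpow (k : ℕ) : Nonneg ((Polynomial.X : Polynomial ℤ) ^ k) := by
  intro i
  simp [coeff_X_pow]
  split <;> norm_num

lemma nonneg_sum {ι : Type*} (s : Finset ι) (f : ι → Polynomial ℤ)
    (h : ∀ i ∈ s, Nonneg (f i)) : Nonneg (∑ i ∈ s, f i) := by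
  classical
  induction s using Finset.cons_induction with
  | empty => simpa using nonneg_zero
  | cons a s ha ih =>
    rw [Finset.sum_cons]
    exact nonneg_add (h a (Finset.mem_cons_self a s))
      (ih fun i hi => h i (Finset.mem_cons_of_mem hi))

lemma eval_one_nonneg {p : Polynomial ℤ} (hp : Nonneg p) : 0 ≤ p.eval 1 := by
  rw [eval_eq_sum_range]
  exact Finset.sum_nonneg fun i _ => by simpa using hp i

lemma ne_zero_of_eval_one_pos {p : Polynomial ℤ} (hp : 0 < p.eval 1) : p ≠ 0 := by
  rintro rfl; simp at hp

lemma natDegree_add_eq {p q : Polynomial ℤ} (hp : Nonneg p) (hq : Nonneg q) :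
    (p + q).natDegree = max p.natDegree q.natDegree := by
  rcases eq_or_ne p 0 with rfl | hp0
  · simp only [zero_add, natDegree_zero, Nat.zero_max]
  rcases eq_or_ne q 0 with rfl | hq0
  · simp only [add_zero, natDegree_zero, Nat.max_zero]
  refine le_antisymm (natDegree_add_le p q) ?_
  have hlp : 0 < p.coeff p.natDegree :=
    lt_of_le_of_ne (hp _) (Ne.symm fun h => hp0 (leadingCoeff_eq_zero.mp h))
  have hlq : 0 < q.coeff q.natDegree :=
    lt_of_le_of_ne (hq _) (Ne.symm fun h => hq0 (leadingCoeff_eq_zero.mp h))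
  set d := max p.natDegree q.natDegree with hd
  have hcoeff : 0 < (p + q).coeff d := by
    rcases le_total p.natDegree q.natDegree with h | h
    · have hdq : d = q.natDegree := max_eq_right h
      rcases lt_or_eq_of_le h with h' | h'
      · have : p.coeff d = 0 := coeff_eq_zero_of_natDegree_lt (hdq ▸ h')
        simp only [coeff_add, this, zero_add]
        exact hdq ▸ hlq
      · simp only [coeff_add]
        have := hlp
        rw [hdq]
        rw [h'] at this
        exact add_pos_of_pos_of_nonneg this (hq _)
    · have hdp : d = p.natDegree := max_eq_left h
      rcases lt_or_eq_of_le h with h' | h'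
      · have : q.coeff d = 0 := coeff_eq_zero_of_natDegree_lt (hdp ▸ h')
        simp only [coeff_add, this, add_zero]
        exact hdp ▸ hlp
      · simp only [coeff_add]
        have := hlq
        rw [hdp]
        rw [h'] at this
        exact add_pos_of_pos_of_nonneg (hdp ▸ hlp) (hq _)
  exact le_natDegree_of_ne_zero (ne_of_gt hcoeff)

lemma natDegree_sum_eq {ι : Type*} (s : Finset ι) (f : ι → Polynomial ℤ)
    (h : ∀ i ∈ s, Nonneg (f i)) :
    (∑ i ∈ s, f i).natDegree = s.sup fun i => (f i).natDegree := by
  classical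
  induction s using Finset.cons_induction with
  | empty => simp
  | cons a s ha ih =>
    rw [Finset.sum_cons, Finset.sup_cons,
      natDegree_add_eq (h a (Finset.mem_cons_self a s))
        (nonneg_sum s f fun i hi => h i (Finset.mem_cons_of_mem hi)),
      ih fun i hi => h i (Finset.mem_cons_of_mem hi)]

lemma gaussBinom_nonneg : ∀ n k, Nonneg (gaussBinom n k)
  | _, 0 => by rw [gaussBinom]; exact nonneg_one
  | 0, k + 1 => by rw [gaussBinom]; exact nonneg_zero
  | n + 1, k + 1 => by
    rw [gaussBinom]
    exact nonneg_add (gaussBinom_nonneg n k)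
      (nonneg_mul (nonneg_Xpow (k + 1)) (gaussBinom_nonneg n (k + 1)))
termination_by n k => (n, k)

lemma gaussBinom_eq_zero : ∀ n k, n < k → gaussBinom n k = 0
  | _, 0, h => by omega
  | 0, k + 1, _ => by rw [gaussBinom]
  | n + 1, k + 1, h => by
    rw [gaussBinom, gaussBinom_eq_zero n k (by omega),
      gaussBinom_eq_zero n (k + 1) (by omega)]
    simp
termination_by n k => (n, k)

lemma gaussBinom_eval_one_pos : ∀ n k, k ≤ n → 0 < (gaussBinom n k).eval 1
  | _, 0, _ => by rw [gaussBinom]; simp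
  | 0, k + 1, h => by omega
  | n + 1, k + 1, h => by
    rw [gaussBinom]
    simp only [eval_add, eval_mul, eval_pow, eval_X, one_pow, one_mul]
    exact add_pos_of_pos_of_nonneg (gaussBinom_eval_one_pos n k (by omega))
      (eval_one_nonneg (gaussBinom_nonneg n (k + 1)))
termination_by n k => (n, k)

lemma gaussBinom_ne_zero {n k : ℕ} (h : k ≤ n) : gaussBinom n k ≠ 0 :=
  ne_zero_of_eval_one_pos (gaussBinom_eval_one_pos n k h)

lemma gaussBinom_natDegree : ∀ n k, k ≤ n → (gaussBinom n k).natDegree = k * (n - k)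
  | _, 0, _ => by rw [gaussBinom]; simp
  | 0, k + 1, h => by omega
  | n + 1, k + 1, h => by
    rcases eq_or_lt_of_le h with h' | h'
    · have hk : k = n := by omega
      rw [hk, gaussBinom, gaussBinom_eq_zero n (n + 1) (by omega)]
      simp [gaussBinom_natDegree n n le_rfl]
    · have hk : k < n := by omega
      rw [gaussBinom,
        natDegree_add_eq (gaussBinom_nonneg n k)
          (nonneg_mul (nonneg_Xpow (k + 1)) (gaussBinom_nonneg n (k + 1))),
        natDegree_mul (pow_ne_zero (k + 1) X_ne_zero) (gaussBinom_ne_zero (by omega : k + 1 ≤ n)),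
        natDegree_X_pow, gaussBinom_natDegree n k (by omega),
        gaussBinom_natDegree n (k + 1) (by omega)]
      have h1 : n - k = (n - (k + 1)) + 1 := by omega
      have h2 : n + 1 - (k + 1) = n - k := by omega
      rw [h2, h1]
      set m := n - (k + 1)
      have h3 : k + 1 + (k + 1) * m = (k + 1) * (m + 1) := by ring
      have h4 : k * (m + 1) ≤ (k + 1) * (m + 1) :=
        Nat.mul_le_mul_right _ (by omega)
      rw [h3, max_eq_right h4]
termination_by n k => (n, k)

lemma qBell_main : ∀ n, Nonneg (qBell n) ∧ 0 < (qBell n).eval 1 ∧ (qBell n).natDegree = g n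
  | 0 => by rw [qBell]; exact ⟨nonneg_one, by simp, by simp [g]⟩
  | n + 1 => by
    have ih : ∀ k, k < n + 1 → Nonneg (qBell k) ∧ 0 < (qBell k).eval 1 ∧
        (qBell k).natDegree = g k := fun k _ => qBell_main k
    have hterm : ∀ k : {x // x ∈ Finset.range (n + 1)},
        Nonneg (gaussBinom n k.1 * qBell k.1) := fun k =>
      nonneg_mul (gaussBinom_nonneg n k.1) (ih k.1 (Finset.mem_range.mp k.2)).1
    rw [qBell]
    constructor
    · exact nonneg_sum _ _ fun k _ => hterm k
    constructor
    · rw [eval_finset_sum]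
      have h0 : (⟨0, Finset.mem_range.mpr (by omega)⟩ : {x // x ∈ Finset.range (n + 1)}) ∈
          (Finset.range (n + 1)).attach := Finset.mem_attach _ _
      refine Finset.sum_pos' (fun k _ => ?_) ⟨_, h0, ?_⟩
      · rw [eval_mul]
        exact mul_nonneg (eval_one_nonneg (gaussBinom_nonneg n k.1))
          (eval_one_nonneg (ih k.1 (Finset.mem_range.mp k.2)).1)
      · rw [eval_mul]
        exact mul_pos (gaussBinom_eval_one_pos n 0 (by omega))
          (ih 0 (by omega)).2.1
    · rw [natDegree_sum_eq _ _ fun k _ => hterm k]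
      have hdeg : ∀ k : {x // x ∈ Finset.range (n + 1)},
          (gaussBinom n k.1 * qBell k.1).natDegree = k.1 * (n - k.1) + g k.1 := by
        intro k
        have hk : k.1 ≤ n := by have := Finset.mem_range.mp k.2; omega
        rw [natDegree_mul (gaussBinom_ne_zero hk)
            (ne_zero_of_eval_one_pos (ih k.1 (by omega)).2.1),
          gaussBinom_natDegree n k.1 hk, (ih k.1 (by omega)).2.2]
      rw [show g (n + 1) = (Finset.range (n + 1)).sup (fun j => j * (n - j) + g (n - j)) from
        by rw [g]]
      have step1 : ((Finset.range (n + 1)).attach.sup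
            fun i => (gaussBinom n i.1 * qBell i.1).natDegree)
          = (Finset.range (n + 1)).attach.sup fun i => i.1 * (n - i.1) + g i.1 :=
        Finset.sup_congr rfl fun k _ => hdeg k
      have step2 : ((Finset.range (n + 1)).attach.sup fun i => i.1 * (n - i.1) + g i.1)
          = (Finset.range (n + 1)).sup fun k => k * (n - k) + g k :=
        Finset.sup_attach (Finset.range (n + 1)) (fun k => k * (n - k) + g k)
      rw [step1, step2]
      apply le_antisymm
      · apply Finset.sup_le
        intro k hk
        have hk' : k ≤ n := by have := Finset.mem_range.mp hk; omega
        have : k * (n - k) + g k = (n - k) * (n - (n - k)) + g (n - (n - k)) := by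
          rw [Nat.sub_sub_self hk', Nat.mul_comm]
        rw [this]
        have hm : n - k ∈ Finset.range (n + 1) := Finset.mem_range.mpr (by omega)
        exact Finset.le_sup (f := fun j => j * (n - j) + g (n - j)) hm
      · apply Finset.sup_le
        intro j hj
        have hj' : j ≤ n := by have := Finset.mem_range.mp hj; omega
        have : j * (n - j) + g (n - j) = (n - j) * (n - (n - j)) + g (n - j) := by
          rw [Nat.sub_sub_self hj', Nat.mul_comm]
        rw [this]
        have hm : n - j ∈ Finset.range (n + 1) := Finset.mem_range.mpr (by omega)
        exact Finset.le_sup (f := fun k => k * (n - k) + g k) hm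

end Stmt10Aux

theorem stmt10 (n : ℕ) : (qBell n).natDegree = g n :=
  (Stmt10Aux.qBell_main n).2.2
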